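/- Let m_1, …, m_k be even integers with each m_i ≥ 2, and suppose the multiset M = {{m_1, …, m_k}} admits a partition into submultisets P_1, …, P_ℓ such that: (i) ℓ = 2^a for some positive integer a; (ii) all the P_i have the same sum; and (iii) for each i, writing P_i = {{m_{1,i}, …, m_{k_i,i}}}, the problem OP*(m_{1,i}, …, m_{k_i,i}) has a solution. Then OP*(m_1, …, m_k) has a solution. -/

import Mathlib

/-- A solution to the directed Oberwolfach problem OP*(m₁, …, m_k). -/
def HasOPSolution (m : List ℕ) : Prop :=
  ∃ σ : Fin (m.sum - 1) → Equiv.Perm (Fin m.sum),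
    (∀ i, (σ i).cycleType = (m : Multiset ℕ)) ∧
    ∀ x y : Fin m.sum, x ≠ y → ∃! i, σ i x = y

section OberwolfachAux

open Equiv Equiv.Perm

theorem myCycleType_permCongr {α β : Type} [Fintype α] [DecidableEq α] [Fintype β] [DecidableEq β]
    (e : α ≃ β) (σ : Perm α) : (e.permCongr σ).cycleType = σ.cycleType := by
  have h : e.permCongr σ
      = σ.extendDomain (e.trans (Equiv.subtypeUnivEquiv (fun _ : β => trivial)).symm) := by
    ext b
    rw [Equiv.Perm.extendDomain_apply_subtype σ _ trivial]
    simp [Equiv.subtypeUnivEquiv]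
  rw [h, Equiv.Perm.cycleType_extendDomain]

def leftEquiv (α β : Type) : α ≃ Subtype (fun x : α ⊕ β => x.isLeft) where
  toFun a := ⟨Sum.inl a, rfl⟩
  invFun x := x.1.getLeft (by obtain ⟨x, h⟩ := x; simpa using h)
  left_inv a := rfl
  right_inv := by rintro ⟨(a | b), h⟩ <;> simp at h ⊢

def rightEquiv (α β : Type) : β ≃ Subtype (fun x : α ⊕ β => x.isRight) where
  toFun b := ⟨Sum.inr b, rfl⟩
  invFun x := x.1.getRight (by obtain ⟨x, h⟩ := x; simpa using h)
  left_inv a := rfl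
  right_inv := by rintro ⟨(a | b), h⟩ <;> simp at h ⊢

theorem myCycleType_sumCongr {α β : Type} [Fintype α] [DecidableEq α] [Fintype β] [DecidableEq β]
    (σ : Perm α) (τ : Perm β) :
    (Equiv.Perm.sumCongr σ τ).cycleType = σ.cycleType + τ.cycleType := by
  have h1 : Equiv.Perm.sumCongr σ (1 : Perm β) = σ.extendDomain (leftEquiv α β) := by
    ext x
    cases x with
    | inl a =>
      rw [Equiv.Perm.extendDomain_apply_subtype σ (leftEquiv α β) (b := Sum.inl a) rfl]; rfl
    | inr b =>
      rw [Equiv.Perm.extendDomain_apply_not_subtype σ (leftEquiv α β) (b := Sum.inr b) (by simp)]; rfl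
  have h2 : Equiv.Perm.sumCongr (1 : Perm α) τ = τ.extendDomain (rightEquiv α β) := by
    ext x
    cases x with
    | inl a =>
      rw [Equiv.Perm.extendDomain_apply_not_subtype τ (rightEquiv α β) (b := Sum.inl a) (by simp)]; rfl
    | inr b =>
      rw [Equiv.Perm.extendDomain_apply_subtype τ (rightEquiv α β) (b := Sum.inr b) rfl]; rfl
  have hd : (Equiv.Perm.sumCongr σ (1 : Perm β)).Disjoint (Equiv.Perm.sumCongr (1 : Perm α) τ) := by
    intro x
    cases x with
    | inl a => right; rfl
    | inr b => left; rfl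
  have hm : Equiv.Perm.sumCongr σ (1 : Perm β) * Equiv.Perm.sumCongr (1 : Perm α) τ
      = Equiv.Perm.sumCongr σ τ := by
    rw [Equiv.Perm.sumCongr_mul, mul_one, one_mul]
  rw [← hm, hd.cycleType_mul, h1, h2, Equiv.Perm.cycleType_extendDomain, Equiv.Perm.cycleType_extendDomain]

/-- The basic side-swapping 2b-cycle on `ZMod b ⊕ ZMod b`. -/
def blockCycle (b : ℕ) : Perm (ZMod b ⊕ ZMod b) :=
  (Equiv.sumCongr (Equiv.refl _) (Equiv.addRight 1)).trans (Equiv.sumComm _ _)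

@[simp] theorem blockCycle_inl (b : ℕ) (x : ZMod b) :
    blockCycle b (Sum.inl x) = Sum.inr x := rfl

@[simp] theorem blockCycle_inr (b : ℕ) (y : ZMod b) :
    blockCycle b (Sum.inr y) = Sum.inl (y + 1) := rfl

theorem blockCycle_pow_two_mul (b : ℕ) (k : ℕ) (x : ZMod b) :
    ((blockCycle b) ^ (2 * k)) (Sum.inl x) = Sum.inl (x + k) := by
  induction k with
  | zero => simp
  | succ n ih =>
    have h : 2 * (n + 1) = 2 + 2 * n := by ring
    rw [h, pow_add, Equiv.Perm.mul_apply, ih, pow_two, Equiv.Perm.mul_apply,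
      blockCycle_inl, blockCycle_inr]
    push_cast
    rw [add_assoc]

theorem blockCycle_pow_two_mul_add_one (b : ℕ) (k : ℕ) (x : ZMod b) :
    ((blockCycle b) ^ (2 * k + 1)) (Sum.inl x) = Sum.inr (x + k) := by
  have h : 2 * k + 1 = 1 + 2 * k := by ring
  rw [h, pow_add, Equiv.Perm.mul_apply, blockCycle_pow_two_mul, pow_one, blockCycle_inl]

theorem blockCycle_isCycle (b : ℕ) [NeZero b] : (blockCycle b).IsCycle := by
  refine ⟨Sum.inl 0, by simp, fun y _ => ?_⟩
  cases y with
  | inl z =>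
    refine ⟨(2 * z.val : ℕ), ?_⟩
    rw [zpow_natCast, blockCycle_pow_two_mul]
    simp [ZMod.natCast_val, ZMod.cast_id]
  | inr z =>
    refine ⟨(2 * z.val + 1 : ℕ), ?_⟩
    rw [zpow_natCast, blockCycle_pow_two_mul_add_one]
    simp [ZMod.natCast_val, ZMod.cast_id]

theorem blockCycle_cycleType (b : ℕ) [NeZero b] :
    (blockCycle b).cycleType = {2 * b} := by
  have hsupp : (blockCycle b).support = Finset.univ := by
    rw [Finset.eq_univ_iff_forall]
    intro x
    rw [Equiv.Perm.mem_support]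
    cases x <;> simp
  rw [(blockCycle_isCycle b).cycleType, hsupp]
  simp [ZMod.card, two_mul]

def SideSwap {α β : Type} (π : Perm (α ⊕ β)) : Prop :=
  (∀ x, (π (Sum.inl x)).isRight) ∧ (∀ y, (π (Sum.inr y)).isLeft)

theorem sideSwap_permCongr_sumCongr {α β α' β' : Type} (e₁ : α ≃ α') (e₂ : β ≃ β')
    {π : Perm (α ⊕ β)} (hπ : SideSwap π) :
    SideSwap ((Equiv.sumCongr e₁ e₂).permCongr π) := by
  constructor
  · intro x
    obtain ⟨y, hy⟩ := Sum.isRight_iff.mp (hπ.1 (e₁.symm x))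
    simp [Equiv.permCongr_apply, hy]
  · intro y
    obtain ⟨x, hx⟩ := Sum.isLeft_iff.mp (hπ.2 (e₂.symm y))
    simp [Equiv.permCongr_apply, hx]

theorem sideSwap_sumSumSumComm {α β γ δ : Type} {σ : Perm (α ⊕ β)} {τ : Perm (γ ⊕ δ)}
    (hσ : SideSwap σ) (hτ : SideSwap τ) :
    SideSwap ((Equiv.sumSumSumComm α β γ δ).permCongr (Equiv.Perm.sumCongr σ τ)) := by
  constructor
  · rintro (a | c)
    · obtain ⟨y, hy⟩ := Sum.isRight_iff.mp (hσ.1 a)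
      simp [Equiv.permCongr_apply, Equiv.sumSumSumComm, hy]
    · obtain ⟨y, hy⟩ := Sum.isRight_iff.mp (hτ.1 c)
      simp [Equiv.permCongr_apply, Equiv.sumSumSumComm, hy]
  · rintro (b | d)
    · obtain ⟨x, hx⟩ := Sum.isLeft_iff.mp (hσ.2 b)
      simp [Equiv.permCongr_apply, Equiv.sumSumSumComm, hx]
    · obtain ⟨x, hx⟩ := Sum.isLeft_iff.mp (hτ.2 d)
      simp [Equiv.permCongr_apply, Equiv.sumSumSumComm, hx]

theorem blockCycle_sideSwap (b : ℕ) : SideSwap (blockCycle b) := by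
  constructor <;> intro x <;> rfl

theorem exists_sideSwap_perm (q : List ℕ) : ∀ (s : ℕ), (∀ x ∈ q, 2 ≤ x ∧ Even x) →
    q.sum = 2 * s → ∃ π : Perm (Fin s ⊕ Fin s), π.cycleType = ↑q ∧ SideSwap π := by
  induction q with
  | nil =>
    intro s _ hsum
    have hs : s = 0 := by simpa using hsum.symm
    subst hs
    refine ⟨1, by simp, ⟨fun x => x.elim0, fun y => y.elim0⟩⟩
  | cons a q ih =>
    intro s hmem hsum
    obtain ⟨b, hb⟩ := (hmem a (by simp)).2
    have ha2 : 2 ≤ a := (hmem a (by simp)).1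
    have hb1 : 1 ≤ b := by omega
    haveI : NeZero b := ⟨by omega⟩
    have hsq : a + q.sum = 2 * s := by simpa using hsum
    set s' : ℕ := s - b with hs'
    have hq' : q.sum = 2 * s' := by omega
    have hss : s = b + s' := by omega
    obtain ⟨π', hπ'c, hπ's⟩ := ih s' (fun x hx => hmem x (by simp [hx])) hq'
    -- equivalence Fin s ≃ ZMod b ⊕ Fin s'
    let eb : ZMod b ≃ Fin b := Fintype.equivFinOfCardEq (ZMod.card b)
    let E : Fin s ≃ ZMod b ⊕ Fin s' :=
      ((finCongr hss).trans finSumFinEquiv.symm).trans (Equiv.sumCongr eb.symm (Equiv.refl _))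
    -- assembled permutation on (ZMod b ⊕ Fin s') ⊕ (ZMod b ⊕ Fin s')
    let mid : Perm ((ZMod b ⊕ Fin s') ⊕ (ZMod b ⊕ Fin s')) :=
      (Equiv.sumSumSumComm _ _ _ _).permCongr (Equiv.Perm.sumCongr (blockCycle b) π')
    refine ⟨(Equiv.sumCongr E.symm E.symm).permCongr mid, ?_, ?_⟩
    · rw [myCycleType_permCongr, myCycleType_permCongr, myCycleType_sumCongr,
        blockCycle_cycleType, hπ'c]
      have : 2 * b = a := by omega
      rw [this]
      simp [Multiset.cons_coe, Multiset.singleton_add]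
    · exact sideSwap_permCongr_sumCongr E.symm E.symm
        (sideSwap_sumSumSumComm (blockCycle_sideSwap b) hπ's)

def OPFam (ι α : Type) [Fintype α] [DecidableEq α] (M : Multiset ℕ) : Prop :=
  ∃ F : ι → Perm α, (∀ i, (F i).cycleType = M) ∧ ∀ x y : α, x ≠ y → ∃! i, F i x = y

theorem hasOP_iff_OPFam (l : List ℕ) :
    HasOPSolution l ↔ OPFam (Fin (l.sum - 1)) (Fin l.sum) ↑l := Iff.rfl

theorem OPFam.transfer {ι ι' α α' : Type} [Fintype α] [DecidableEq α] [Fintype α'] [DecidableEq α']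
    {M : Multiset ℕ} (e₁ : ι ≃ ι') (e₂ : α ≃ α') (h : OPFam ι α M) : OPFam ι' α' M := by
  obtain ⟨F, hc, hu⟩ := h
  refine ⟨fun i => e₂.permCongr (F (e₁.symm i)), fun i => by rw [myCycleType_permCongr]; exact hc _, ?_⟩
  intro x y hxy
  obtain ⟨j, hj, hju⟩ := hu (e₂.symm x) (e₂.symm y) (fun hc => hxy (by simpa using congrArg e₂ hc))
  refine ⟨e₁ j, ?_, ?_⟩
  · simp [Equiv.permCongr_apply, hj]
  · intro i hi
    have : F (e₁.symm i) (e₂.symm x) = e₂.symm y := by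
      simpa [Equiv.permCongr_apply] using congrArg e₂.symm hi
    have := hju _ this
    simpa using congrArg e₁ this

def MSol (M : Multiset ℕ) : Prop := ∃ l : List ℕ, (l : Multiset ℕ) = M ∧ HasOPSolution l

theorem msol_zero : MSol 0 :=
  ⟨[], rfl, fun _ => 1, fun i => i.elim0, fun x => x.elim0⟩

theorem core (M₁ M₂ : Multiset ℕ) (hmem : ∀ x ∈ M₁ + M₂, 2 ≤ x ∧ Even x)
    (hsum : M₁.sum = M₂.sum) (h₁ : MSol M₁) (h₂ : MSol M₂) : MSol (M₁ + M₂) := by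
  obtain ⟨l₁, hl₁, sol₁⟩ := h₁
  obtain ⟨l₂, hl₂, sol₂⟩ := h₂
  set s := M₁.sum with hs
  by_cases hs0 : s = 0
  · -- degenerate case: everything empty
    have hM₁ : M₁ = 0 := by
      by_contra hne
      obtain ⟨x, hx⟩ := Multiset.exists_mem_of_ne_zero hne
      have hx2 := (hmem x (Multiset.mem_add.mpr (Or.inl hx))).1
      have := Multiset.single_le_sum (fun y _ => Nat.zero_le y) x hx
      omega
    have hM₂ : M₂ = 0 := by
      by_contra hne
      obtain ⟨x, hx⟩ := Multiset.exists_mem_of_ne_zero hne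
      have hx2 := (hmem x (Multiset.mem_add.mpr (Or.inr hx))).1
      have := Multiset.single_le_sum (fun y _ => Nat.zero_le y) x hx
      omega
    rw [hM₁, hM₂, add_zero]
    exact msol_zero
  · haveI : NeZero s := ⟨hs0⟩
    have hsum₁ : l₁.sum = s := by rw [hs, ← hl₁]; rfl
    have hsum₂ : l₂.sum = s := by rw [hsum, ← hl₂]; rfl
    -- transfer the two solutions to ZMod s
    have ez : Fin s ≃ ZMod s := (Fintype.equivFinOfCardEq (ZMod.card s)).symm
    have hF : OPFam (Fin (s - 1)) (ZMod s) M₁ := by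
      rw [← hl₁]
      exact (hasOP_iff_OPFam l₁ |>.mp sol₁).transfer (finCongr (by rw [hsum₁]))
        ((finCongr hsum₁).trans ez)
    have hG : OPFam (Fin (s - 1)) (ZMod s) M₂ := by
      rw [← hl₂]
      exact (hasOP_iff_OPFam l₂ |>.mp sol₂).transfer (finCongr (by rw [hsum₂]))
        ((finCongr hsum₂).trans ez)
    obtain ⟨F, hFc, hFu⟩ := hF
    obtain ⟨G, hGc, hGu⟩ := hG
    -- the side-swapping permutation with cycle type M₁ + M₂
    obtain ⟨π₁, hπ₁c, hπ₁s⟩ := exists_sideSwap_perm (l₁ ++ l₂) s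
      (by intro x hx
          refine hmem x ?_
          rw [← hl₁, ← hl₂]
          rcases List.mem_append.mp hx with h | h
          · exact Multiset.mem_add.mpr (Or.inl h)
          · exact Multiset.mem_add.mpr (Or.inr h))
      (by rw [List.sum_append, hsum₁, hsum₂]; ring)
    set π₀ : Perm (ZMod s ⊕ ZMod s) := (Equiv.sumCongr ez ez).permCongr π₁ with hπ₀
    have hπ₀c : π₀.cycleType = M₁ + M₂ := by
      rw [hπ₀, myCycleType_permCongr, hπ₁c, ← hl₁, ← hl₂]
      exact congrArg _ rfl
    have hπ₀s : SideSwap π₀ := sideSwap_permCongr_sumCongr ez ez hπ₁s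
    -- extract the two "sides" of π₀
    have hA : ∀ x, ∃ y, π₀ (Sum.inl x) = Sum.inr y := fun x => Sum.isRight_iff.mp (hπ₀s.1 x)
    have hB : ∀ y, ∃ x, π₀ (Sum.inr y) = Sum.inl x := fun y => Sum.isLeft_iff.mp (hπ₀s.2 y)
    choose A hA using hA
    choose B hB using hB
    have hBinj : Function.Injective B := by
      intro y₁ y₂ h
      have : π₀ (Sum.inr y₁) = π₀ (Sum.inr y₂) := by rw [hB, hB, h]
      simpa using π₀.injective this
    have hBbij : Function.Bijective B := (Finite.injective_iff_bijective).mp hBinj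
    -- the family of conjugating translations
    let ct : ZMod s → Perm (ZMod s ⊕ ZMod s) :=
      fun t => Equiv.sumCongr (Equiv.refl _) (Equiv.addRight t)
    let H : (Fin (s - 1)) ⊕ ZMod s → Perm (ZMod s ⊕ ZMod s) := fun i =>
      match i with
      | Sum.inl j => Equiv.Perm.sumCongr (F j) (G j)
      | Sum.inr t => (ct t) * π₀ * (ct t)⁻¹
    have hHinr : ∀ t z, H (Sum.inr t) z = ct t (π₀ ((ct t).symm z)) := fun t z => rfl
    have hct_inl : ∀ t x, (ct t).symm (Sum.inl x) = Sum.inl x := fun t x => rfl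
    have hct_inr : ∀ t (y : ZMod s), (ct t).symm (Sum.inr y) = Sum.inr (y - t) := by
      intro t y
      show Sum.inr ((Equiv.addRight t).symm y) = Sum.inr (y - t)
      congr 1
      rw [Equiv.symm_apply_eq, Equiv.coe_addRight]
      ring
    have hHinr_inl : ∀ t x, H (Sum.inr t) (Sum.inl x) = Sum.inr (A x + t) := by
      intro t x
      rw [hHinr, hct_inl, hA]
      rfl
    have hHinr_inr : ∀ t y, H (Sum.inr t) (Sum.inr y) = Sum.inl (B (y - t)) := by
      intro t y
      rw [hHinr, hct_inr, hB]
      rfl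
    have hHinl_inl : ∀ j x, H (Sum.inl j) (Sum.inl x) = Sum.inl (F j x) := fun _ _ => rfl
    have hHinl_inr : ∀ j y, H (Sum.inl j) (Sum.inr y) = Sum.inr (G j y) := fun _ _ => rfl
    have hOP : OPFam ((Fin (s - 1)) ⊕ ZMod s) (ZMod s ⊕ ZMod s) (M₁ + M₂) := by
      refine ⟨H, ?_, ?_⟩
      · rintro (j | t)
        · show (Equiv.Perm.sumCongr (F j) (G j)).cycleType = _
          rw [myCycleType_sumCongr, hFc, hGc]
        · show ((ct t) * π₀ * (ct t)⁻¹).cycleType = _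
          rw [Equiv.Perm.cycleType_conj, hπ₀c]
      · rintro (x | x) (y | y) hxy
        · -- inl to inl : within first group
          obtain ⟨j₀, hj₀, hj₀u⟩ := hFu x y (fun h => hxy (by rw [h]))
          refine ⟨Sum.inl j₀, ?_, ?_⟩
          · show H (Sum.inl j₀) (Sum.inl x) = Sum.inl y
            rw [hHinl_inl, hj₀]
          rintro (j | t) h
          · rw [hHinl_inl] at h
            rw [hj₀u j (Sum.inl.inj h)]
          · rw [hHinr_inl] at h
            simp at h
        · -- inl to inr : bipartite, forward direction
          refine ⟨Sum.inr (y - A x), ?_, ?_⟩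
          · show H (Sum.inr (y - A x)) (Sum.inl x) = Sum.inr y
            rw [hHinr_inl]
            congr 1
            ring
          · rintro (j | t) h
            · rw [hHinl_inl] at h
              simp at h
            · rw [hHinr_inl] at h
              have ht := Sum.inr.inj h
              rw [show t = y - A x from by rw [← ht]; ring]
        · -- inr to inl : bipartite, backward direction
          obtain ⟨z, hz, hzu⟩ := hBbij.existsUnique y
          refine ⟨Sum.inr (x - z), ?_, ?_⟩
          · show H (Sum.inr (x - z)) (Sum.inr x) = Sum.inl y
            rw [hHinr_inr, show x - (x - z) = z from by ring, hz]
          · rintro (j | t) h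
            · rw [hHinl_inr] at h
              simp at h
            · rw [hHinr_inr] at h
              have ht := hzu _ (Sum.inl.inj h)
              rw [show t = x - z from by rw [← ht]; ring]
        · -- inr to inr : within second group
          obtain ⟨j₀, hj₀, hj₀u⟩ := hGu x y (fun h => hxy (by rw [h]))
          refine ⟨Sum.inl j₀, ?_, ?_⟩
          · show H (Sum.inl j₀) (Sum.inr x) = Sum.inr y
            rw [hHinl_inr, hj₀]
          rintro (j | t) h
          · rw [hHinl_inr] at h
            rw [hj₀u j (Sum.inr.inj h)]
          · rw [hHinr_inr] at h
            simp at h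
    -- transfer to the canonical form
    refine ⟨l₁ ++ l₂, ?_, ?_⟩
    · show ((l₁ : Multiset ℕ) + (l₂ : Multiset ℕ)) = M₁ + M₂
      rw [hl₁, hl₂]
    · rw [hasOP_iff_OPFam]
      have hl12 : ((l₁ ++ l₂ : List ℕ) : Multiset ℕ) = M₁ + M₂ := by
        show ((l₁ : Multiset ℕ) + (l₂ : Multiset ℕ)) = M₁ + M₂
        rw [hl₁, hl₂]
      rw [hl12]
      refine hOP.transfer (Fintype.equivFinOfCardEq ?_) (Fintype.equivFinOfCardEq ?_)
      · rw [List.sum_append, hsum₁, hsum₂]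
        simp [ZMod.card]
        omega
      · rw [List.sum_append, hsum₁, hsum₂]
        simp [ZMod.card]

theorem main_aux : ∀ (a : ℕ) (P : Fin (2 ^ a) → Multiset ℕ),
    (∀ i, ∀ x ∈ P i, 2 ≤ x ∧ Even x) →
    (∀ i j, (P i).sum = (P j).sum) →
    (∀ i, MSol (P i)) → MSol (∑ i, P i) := by
  intro a
  induction a with
  | zero =>
    intro P _ _ hsol
    rw [show (∑ i, P i) = P 0 from Fin.sum_univ_one P]
    exact hsol 0
  | succ a ih =>
    intro P hmem hsums hsol
    have he : 2 ^ a * 2 = 2 ^ (a + 1) := by rw [pow_succ]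
    let e : Fin (2 ^ a) × Fin 2 ≃ Fin (2 ^ (a + 1)) := finProdFinEquiv.trans (finCongr he)
    let Q : Fin (2 ^ a) → Multiset ℕ := fun j => P (e (j, 0)) + P (e (j, 1))
    have hQ : ∑ j, Q j = ∑ i, P i := by
      rw [← Equiv.sum_comp e P, Fintype.sum_prod_type]
      exact Finset.sum_congr rfl (fun j _ => (Fin.sum_univ_two (fun k => P (e (j, k)))).symm)
    rw [← hQ]
    refine ih Q ?_ ?_ ?_
    · intro j x hx
      rcases Multiset.mem_add.mp hx with h | h
      · exact hmem _ x h
      · exact hmem _ x h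
    · intro i j
      show (P _ + P _).sum = (P _ + P _).sum
      rw [Multiset.sum_add, Multiset.sum_add, hsums (e (i, 0)) (e (j, 0)),
        hsums (e (i, 1)) (e (j, 1))]
    · intro j
      exact core _ _ (fun x hx => by
          rcases Multiset.mem_add.mp hx with h | h
          · exact hmem _ x h
          · exact hmem _ x h)
        (hsums _ _) (hsol _) (hsol _)

end OberwolfachAux

/-- Corollary: if the multiset of (even, ≥ 2) cycle lengths partitions into 2^a
nonempty submultisets of equal sums, each of which (as a list of cycle lengths)
admits a solution to OP*, then the whole problem has a solution. -/
theorem stmt9 (m : List ℕ) (h2 : ∀ x ∈ m, 2 ≤ x) (heven : ∀ x ∈ m, Even x)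
    (a : ℕ) (ha : 0 < a) (P : Fin (2 ^ a) → Multiset ℕ)
    (hPne : ∀ i, P i ≠ 0)
    (hpart : ∑ i, P i = (m : Multiset ℕ))
    (hsums : ∀ i j, (P i).sum = (P j).sum)
    (hsol : ∀ i, ∃ l : List ℕ, (l : Multiset ℕ) = P i ∧ HasOPSolution l) :
    HasOPSolution m := by
  have hmem : ∀ i, ∀ x ∈ P i, 2 ≤ x ∧ Even x := by
    intro i x hx
    have hxm : x ∈ (m : Multiset ℕ) := by
      rw [← hpart]
      exact Multiset.mem_sum.mpr ⟨i, Finset.mem_univ i, hx⟩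
    exact ⟨h2 x (by exact_mod_cast hxm), heven x (by exact_mod_cast hxm)⟩
  obtain ⟨l, hl, hsl⟩ := main_aux a P hmem hsums hsol
  rw [hpart] at hl
  have hsum : l.sum = m.sum := by
    have := congrArg Multiset.sum hl
    simpa using this
  rw [hasOP_iff_OPFam]
  rw [← hl]
  exact (hasOP_iff_OPFam l |>.mp hsl).transfer (finCongr (by rw [hsum])) (finCongr hsum)
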